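/- Let Ω ⊆ ℝⁿ, n ≥ 1, δ ∈ (0, n], and 1 ≤ p < ∞. Then the functional ‖f‖ := ( ∫_Ω |f|^p dH^δ_∞ )^{1/p} is a quasi-norm on the space of (equivalence classes modulo equality H^δ_∞-almost everywhere of) functions f : Ω → [−∞, ∞] with ∫_Ω |f|^p dH^δ_∞ < ∞; in particular there exists a constant c ≥ 1 such that ‖f + g‖ ≤ c ‖f‖ + c ‖g‖ for all such f, g, and ‖f‖ = 0 if and only if f = 0 H^δ_∞-almost everywhere, and ‖a f‖ = |a| ‖f‖ for all a ∈ ℝ. -/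

import Mathlib

open Metric Set ENNReal

/-- The δ-dimensional Hausdorff content of a set `E ⊆ ℝⁿ`: the infimum of `∑ rᵢ^δ`
over all countable covers of `E` by open balls `B(xᵢ, rᵢ)`. -/
noncomputable def hContent (n : ℕ) (δ : ℝ) (E : Set (EuclideanSpace ℝ (Fin n))) : ℝ≥0∞ :=
  ⨅ (c : ℕ → EuclideanSpace ℝ (Fin n)) (r : ℕ → NNReal)
    (_ : E ⊆ ⋃ i, Metric.ball (c i) (r i)), ∑' i, (r i : ℝ≥0∞) ^ δ

/-- The Choquet integral `∫_Ω f dH^δ_∞ = ∫_0^∞ H^δ_∞({x ∈ Ω : f x > t}) dt`. -/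
noncomputable def choquet (n : ℕ) (δ : ℝ) (Ω : Set (EuclideanSpace ℝ (Fin n)))
    (f : EuclideanSpace ℝ (Fin n) → ℝ≥0∞) : ℝ≥0∞ :=
  ∫⁻ t in Set.Ioi (0 : ℝ), hContent n δ {x | x ∈ Ω ∧ ENNReal.ofReal t < f x}

/-! The Choquet integral only uses that `H^δ_∞` is an outer measure `μ`. Pointwise
`|f + g|^p ≤ 2^p max(|f|^p, |g|^p)`. Superlevel sets of a maximum are unions, so subadditivity
of `μ` gives `∫ max(u, v) dμ ≤ ∫ u dμ + ∫ v dμ`, and the substitution `t ↦ ct` in the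
layer-cake integral gives `∫ c u dμ = c ∫ u dμ`. Taking `p`-th roots and using
`(A + B)^{1/p} ≤ A^{1/p} + B^{1/p}` yields the quasi-triangle inequality with constant `2`.
Since `t ↦ μ{u > t}` is antitone, its integral vanishes iff it vanishes for all `t > 0`, which by
countable subadditivity means `μ{u ≠ 0} = 0`. -/

open MeasureTheory

theorem EReal.abs_add_le (x y : EReal) : (x + y).abs ≤ x.abs + y.abs := by
  induction x using EReal.rec with
  | bot => simp
  | top => induction y using EReal.rec <;> simp
  | coe a =>
    induction y using EReal.rec with
    | bot => simp
    | top => simp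
    | coe b =>
      rw [← EReal.coe_add, EReal.abs_def, EReal.abs_def, EReal.abs_def,
        ← ENNReal.ofReal_add (abs_nonneg _) (abs_nonneg _)]
      exact ENNReal.ofReal_le_ofReal (_root_.abs_add_le a b)

theorem EReal.abs_add_rpow_le {p : ℝ} (hp : 0 ≤ p) (x y : EReal) :
    (x + y).abs ^ p ≤ 2 ^ p * max (x.abs ^ p) (y.abs ^ p) := by
  have h : (x + y).abs ≤ 2 * max x.abs y.abs := calc
    (x + y).abs ≤ x.abs + y.abs := abs_add_le x y
    _ ≤ max x.abs y.abs + max x.abs y.abs := add_le_add (le_max_left _ _) (le_max_right _ _)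
    _ = 2 * max x.abs y.abs := (two_mul _).symm
  calc (x + y).abs ^ p ≤ (2 * max x.abs y.abs) ^ p := ENNReal.rpow_le_rpow h hp
    _ = 2 ^ p * max (x.abs ^ p) (y.abs ^ p) := by
      rw [ENNReal.mul_rpow_of_nonneg _ _ hp, (ENNReal.monotone_rpow_of_nonneg hp).map_max]

theorem lintegral_Ioi_comp_mul_left {c : ℝ} (hc : 0 < c) (F : ℝ → ℝ≥0∞) :
    ∫⁻ t in Ioi 0, F (c * t) = ENNReal.ofReal c⁻¹ * ∫⁻ t in Ioi 0, F t := by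
  have hemb : MeasurableEmbedding (c * ·) := (Homeomorph.mulLeft₀ c hc.ne').measurableEmbedding
  have hpre : (c * ·) ⁻¹' Ioi 0 = Ioi 0 := by rw [preimage_const_mul_Ioi₀ _ hc, zero_div]
  have hmap : Measure.map (c * ·) (volume.restrict (Ioi 0)) =
      (ENNReal.ofReal c⁻¹ • volume).restrict (Ioi 0) := by
    rw [← abs_of_pos (inv_pos.mpr hc), ← Real.map_volume_mul_left hc.ne',
      Measure.restrict_map hemb.measurable measurableSet_Ioi, hpre]
  rw [← hemb.lintegral_map, hmap, Measure.restrict_smul, lintegral_smul_measure, smul_eq_mul]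

theorem Antitone.eq_zero_of_setLIntegral_Ioi_eq_zero {F : ℝ → ℝ≥0∞} (hF : Antitone F)
    (h : ∫⁻ t in Ioi 0, F t = 0) {t : ℝ} (ht : 0 < t) : F t = 0 := by
  have : F t * ENNReal.ofReal t ≤ 0 := calc
    F t * ENNReal.ofReal t = ∫⁻ _ in Ioo 0 t, F t := by
      rw [setLIntegral_const, Real.volume_Ioo, sub_zero]
    _ ≤ ∫⁻ s in Ioo 0 t, F s := setLIntegral_mono hF.measurable fun s hs => hF hs.2.le
    _ ≤ ∫⁻ s in Ioi 0, F s := lintegral_mono_set Ioo_subset_Ioi_self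
    _ = 0 := h
  simpa [ht.not_ge] using this

section Choquet

variable {α : Type*} (μ : OuterMeasure α) (Ω : Set α)

noncomputable def choquetIntegral (f : α → ℝ≥0∞) : ℝ≥0∞ :=
  ∫⁻ t in Ioi (0 : ℝ), μ {x | x ∈ Ω ∧ ENNReal.ofReal t < f x}

theorem antitone_outerMeasure_superlevel (f : α → ℝ≥0∞) :
    Antitone fun t : ℝ => μ {x | x ∈ Ω ∧ ENNReal.ofReal t < f x} :=
  fun _ _ hst => measure_mono fun _ hx => ⟨hx.1, (ENNReal.ofReal_le_ofReal hst).trans_lt hx.2⟩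

variable {μ Ω}

theorem choquetIntegral_mono {f g : α → ℝ≥0∞} (hfg : ∀ x, f x ≤ g x) :
    choquetIntegral μ Ω f ≤ choquetIntegral μ Ω g :=
  lintegral_mono fun _ => measure_mono fun x hx => ⟨hx.1, hx.2.trans_le (hfg x)⟩

theorem choquetIntegral_const_mul {c : ℝ≥0∞} (hc : c ≠ ∞) (f : α → ℝ≥0∞) :
    choquetIntegral μ Ω (fun x => c * f x) = c * choquetIntegral μ Ω f := by
  rcases eq_or_ne c 0 with rfl | hc0
  · simp [choquetIntegral]
  lift c to NNReal using hc
  have hc' : (0 : ℝ) < c := by simpa [pos_iff_ne_zero] using hc0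
  have hlevel : ∀ t : ℝ, {x | x ∈ Ω ∧ ENNReal.ofReal t < c * f x} =
      {x | x ∈ Ω ∧ ENNReal.ofReal ((c : ℝ)⁻¹ * t) < f x} := by
    refine fun t => Set.ext fun x => and_congr_right fun _ => ?_
    rw [inv_mul_eq_div, ENNReal.ofReal_div_of_pos hc', ENNReal.ofReal_coe_nnreal,
      ENNReal.div_lt_iff (Or.inl hc0) (Or.inl coe_ne_top), mul_comm]
  simp only [choquetIntegral, hlevel]
  rw [lintegral_Ioi_comp_mul_left (inv_pos.2 hc') fun t => μ {x | x ∈ Ω ∧ ENNReal.ofReal t < f x},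
    inv_inv, ENNReal.ofReal_coe_nnreal]

theorem choquetIntegral_max_le (f g : α → ℝ≥0∞) :
    choquetIntegral μ Ω (fun x => max (f x) (g x)) ≤
      choquetIntegral μ Ω f + choquetIntegral μ Ω g :=
  calc choquetIntegral μ Ω (fun x => max (f x) (g x))
      ≤ ∫⁻ t in Ioi (0 : ℝ), (μ {x | x ∈ Ω ∧ ENNReal.ofReal t < f x} +
          μ {x | x ∈ Ω ∧ ENNReal.ofReal t < g x}) := by
        refine lintegral_mono fun t => (measure_mono fun x hx => ?_).trans (measure_union_le _ _)
        rcases lt_max_iff.1 hx.2 with h | h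
        exacts [Or.inl ⟨hx.1, h⟩, Or.inr ⟨hx.1, h⟩]
    _ = choquetIntegral μ Ω f + choquetIntegral μ Ω g :=
        lintegral_add_left (antitone_outerMeasure_superlevel μ Ω f).measurable _

theorem choquetIntegral_eq_zero_iff (f : α → ℝ≥0∞) :
    choquetIntegral μ Ω f = 0 ↔ μ {x | x ∈ Ω ∧ f x ≠ 0} = 0 := by
  constructor
  · intro h
    have hlevel (k : ℕ) : μ {x | x ∈ Ω ∧ ENNReal.ofReal (1 / (k + 1)) < f x} = 0 :=
      (antitone_outerMeasure_superlevel μ Ω f).eq_zero_of_setLIntegral_Ioi_eq_zero h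
        Nat.one_div_pos_of_nat
    refine measure_mono_null (fun x hx => ?_) (measure_iUnion_null hlevel)
    obtain ⟨r, -, hr0, hr⟩ := ENNReal.lt_iff_exists_real_btwn.1 (pos_iff_ne_zero.2 hx.2)
    obtain ⟨k, hk⟩ := exists_nat_one_div_lt (ENNReal.ofReal_pos.1 hr0)
    exact mem_iUnion.2 ⟨k, hx.1, (ENNReal.ofReal_le_ofReal hk.le).trans_lt hr⟩
  · intro h
    have hlevel (t : ℝ) : μ {x | x ∈ Ω ∧ ENNReal.ofReal t < f x} = 0 :=
      measure_mono_null (fun _ hx => ⟨hx.1, (zero_le.trans_lt hx.2).ne'⟩ :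
        _ ⊆ {x | x ∈ Ω ∧ f x ≠ 0}) h
    simp [choquetIntegral, hlevel]

variable (μ Ω) in
noncomputable def choquetNorm (p : ℝ) (f : α → EReal) : ℝ≥0∞ :=
  choquetIntegral μ Ω (fun x => (f x).abs ^ p) ^ (1 / p)

variable {p : ℝ}

theorem choquetNorm_add_le (hp : 1 ≤ p) (f g : α → EReal) :
    choquetNorm μ Ω p (f + g) ≤ 2 * choquetNorm μ Ω p f + 2 * choquetNorm μ Ω p g := by
  have hp0 : 0 < p := zero_lt_one.trans_le hp
  set A := choquetIntegral μ Ω fun x => (f x).abs ^ p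
  set B := choquetIntegral μ Ω fun x => (g x).abs ^ p
  have hint : choquetIntegral μ Ω (fun x => (f x + g x).abs ^ p) ≤ 2 ^ p * (A + B) := calc
    _ ≤ choquetIntegral μ Ω (fun x => 2 ^ p * max ((f x).abs ^ p) ((g x).abs ^ p)) :=
      choquetIntegral_mono fun x => EReal.abs_add_rpow_le hp0.le _ _
    _ ≤ 2 ^ p * (A + B) := by
      rw [choquetIntegral_const_mul (by finiteness)]
      exact mul_le_mul_right (choquetIntegral_max_le _ _) _
  calc choquetNorm μ Ω p (f + g) ≤ (2 ^ p * (A + B)) ^ (1 / p) :=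
        ENNReal.rpow_le_rpow hint (by positivity)
    _ = 2 * (A + B) ^ (1 / p) := by
        rw [ENNReal.mul_rpow_of_nonneg _ _ (by positivity), one_div, ENNReal.rpow_rpow_inv hp0.ne']
    _ ≤ 2 * (A ^ (1 / p) + B ^ (1 / p)) :=
        mul_le_mul_right (ENNReal.rpow_add_le_add_rpow A B (by positivity)
          ((div_le_one hp0).2 hp)) 2
    _ = 2 * choquetNorm μ Ω p f + 2 * choquetNorm μ Ω p g := mul_add _ _ _

theorem choquetNorm_eq_zero_iff (hp : 0 < p) (f : α → EReal) :
    choquetNorm μ Ω p f = 0 ↔ μ {x | x ∈ Ω ∧ f x ≠ 0} = 0 := by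
  have hf (x : α) : (f x).abs ^ p ≠ 0 ↔ f x ≠ 0 := by
    simp [ENNReal.rpow_eq_zero_iff, hp, hp.not_gt, EReal.abs_eq_zero_iff]
  simp only [choquetNorm, ENNReal.rpow_eq_zero_iff, one_div, inv_pos, hp, and_true, inv_neg'',
    hp.not_gt, and_false, or_false, choquetIntegral_eq_zero_iff, hf]

theorem choquetNorm_const_mul (hp : 0 < p) (a : ℝ) (f : α → EReal) :
    choquetNorm μ Ω p (fun x => a * f x) = ENNReal.ofReal |a| * choquetNorm μ Ω p f := by
  have habs (x : α) : ((a : EReal) * f x).abs ^ p = ENNReal.ofReal |a| ^ p * (f x).abs ^ p := by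
    rw [EReal.abs_mul, EReal.abs_def, ENNReal.mul_rpow_of_nonneg _ _ hp.le]
  simp only [choquetNorm, habs]
  rw [choquetIntegral_const_mul (by finiteness), ENNReal.mul_rpow_of_nonneg _ _ (by positivity),
    one_div, ENNReal.rpow_rpow_inv hp.ne']

end Choquet

section HausdorffContent

variable {n : ℕ} {δ : ℝ}

theorem hContent_le_tsum {E : Set (EuclideanSpace ℝ (Fin n))} (c : ℕ → EuclideanSpace ℝ (Fin n))
    (r : ℕ → NNReal) (hE : E ⊆ ⋃ i, ball (c i) (r i)) :
    hContent n δ E ≤ ∑' i, (r i : ℝ≥0∞) ^ δ :=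
  iInf₂_le_of_le c r (iInf_le _ hE)

theorem exists_cover_of_hContent_lt {E : Set (EuclideanSpace ℝ (Fin n))} {a : ℝ≥0∞}
    (h : hContent n δ E < a) : ∃ (c : ℕ → EuclideanSpace ℝ (Fin n)) (r : ℕ → NNReal),
      E ⊆ ⋃ i, ball (c i) (r i) ∧ ∑' i, (r i : ℝ≥0∞) ^ δ < a := by
  simpa only [hContent, iInf_lt_iff, exists_prop] using h

theorem hContent_mono {E F : Set (EuclideanSpace ℝ (Fin n))} (h : E ⊆ F) :
    hContent n δ E ≤ hContent n δ F :=
  le_iInf₂ fun c r => le_iInf fun hF => hContent_le_tsum c r (h.trans hF)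

theorem hContent_empty (hδ : 0 < δ) : hContent n δ ∅ = 0 :=
  nonpos_iff_eq_zero.1 <| (hContent_le_tsum (fun _ => 0) (fun _ => 0) (empty_subset _)).trans_eq
    (by simp [ENNReal.zero_rpow_of_pos hδ])

theorem hContent_iUnion_le (s : ℕ → Set (EuclideanSpace ℝ (Fin n))) :
    hContent n δ (⋃ k, s k) ≤ ∑' k, hContent n δ (s k) := by
  refine ENNReal.le_of_forall_pos_le_add fun ε hε hlt => ?_
  obtain ⟨ε', hε'0, hε'⟩ := ENNReal.exists_pos_sum_of_countable (coe_ne_zero.2 hε.ne') ℕ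
  have hcover (k : ℕ) := exists_cover_of_hContent_lt (ENNReal.lt_add_right
    (ne_top_of_le_ne_top hlt.ne (ENNReal.le_tsum k)) (coe_ne_zero.2 (hε'0 k).ne'))
  choose c r hsub hsum using hcover
  let e : ℕ ≃ ℕ × ℕ := (Denumerable.eqv (ℕ × ℕ)).symm
  have hsub' : (⋃ k, s k) ⊆ ⋃ m, ball (c (e m).1 (e m).2) (r (e m).1 (e m).2) := by
    simp only [iUnion_subset_iff]
    intro k x hx
    obtain ⟨i, hi⟩ := mem_iUnion.1 (hsub k hx)
    exact mem_iUnion.2 ⟨e.symm (k, i), by simpa using hi⟩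
  calc hContent n δ (⋃ k, s k) ≤ ∑' m, (r (e m).1 (e m).2 : ℝ≥0∞) ^ δ := hContent_le_tsum _ _ hsub'
    _ = ∑' k, ∑' i, (r k i : ℝ≥0∞) ^ δ := by
      rw [← ENNReal.tsum_prod]
      exact e.tsum_eq fun q => (r q.1 q.2 : ℝ≥0∞) ^ δ
    _ ≤ ∑' k, (hContent n δ (s k) + ε' k) := ENNReal.tsum_le_tsum fun k => (hsum k).le
    _ = ∑' k, hContent n δ (s k) + ∑' k, (ε' k : ℝ≥0∞) := ENNReal.tsum_add
    _ ≤ ∑' k, hContent n δ (s k) + ε := add_le_add le_rfl hε'.le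

variable (n) in
noncomputable def hContentOuterMeasure (hδ : 0 < δ) : OuterMeasure (EuclideanSpace ℝ (Fin n)) where
  measureOf := hContent n δ
  empty := hContent_empty hδ
  mono := hContent_mono
  iUnion_nat s _ := hContent_iUnion_le s

end HausdorffContent

theorem choquet_quasinorm_general (n : ℕ) (δ : ℝ) (hδ0 : 0 < δ)
    (p : ℝ) (hp : 1 ≤ p) (Ω : Set (EuclideanSpace ℝ (Fin n))) :
    (∃ c : ℝ≥0∞, 1 ≤ c ∧ c ≠ ∞ ∧
      ∀ f g : EuclideanSpace ℝ (Fin n) → EReal,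
        choquet n δ Ω (fun x => (f x).abs ^ p) < ∞ →
        choquet n δ Ω (fun x => (g x).abs ^ p) < ∞ →
        (choquet n δ Ω (fun x => ((f x + g x).abs) ^ p)) ^ (1 / p) ≤
          c * (choquet n δ Ω (fun x => (f x).abs ^ p)) ^ (1 / p) +
            c * (choquet n δ Ω (fun x => (g x).abs ^ p)) ^ (1 / p)) ∧
    (∀ f : EuclideanSpace ℝ (Fin n) → EReal,
      ((choquet n δ Ω (fun x => (f x).abs ^ p)) ^ (1 / p) = 0 ↔
        hContent n δ {x | x ∈ Ω ∧ f x ≠ 0} = 0)) ∧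
    (∀ (a : ℝ) (f : EuclideanSpace ℝ (Fin n) → EReal),
      (choquet n δ Ω (fun x => (((a : EReal) * f x).abs) ^ p)) ^ (1 / p) =
        ENNReal.ofReal |a| * (choquet n δ Ω (fun x => (f x).abs ^ p)) ^ (1 / p)) := by
  have hp0 : 0 < p := zero_lt_one.trans_le hp
  -- `choquet n δ Ω` is `choquetIntegral μ Ω` by definition, so the norm lemmas apply verbatim.
  let μ := hContentOuterMeasure n hδ0
  exact ⟨⟨2, one_le_two, ofNat_ne_top, fun f g _ _ => choquetNorm_add_le (μ := μ) (Ω := Ω) hp f g⟩,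
    choquetNorm_eq_zero_iff (μ := μ) hp0, choquetNorm_const_mul (μ := μ) hp0⟩

/-- The functional `‖f‖ = (∫_Ω |f|^p dH^δ_∞)^{1/p}` is a quasi-norm on functions
`f : ℝⁿ → [-∞, ∞]` with finite Choquet `p`-integral: there is a constant `c ≥ 1` for the
quasi-triangle inequality; `‖f‖ = 0` iff `f = 0` `H^δ_∞`-almost everywhere on `Ω`;
and `‖a f‖ = |a| ‖f‖`. -/
theorem choquet_quasinorm (n : ℕ) (hn : 1 ≤ n) (δ : ℝ) (hδ0 : 0 < δ) (hδn : δ ≤ n)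
    (p : ℝ) (hp : 1 ≤ p) (Ω : Set (EuclideanSpace ℝ (Fin n))) :
    (∃ c : ℝ≥0∞, 1 ≤ c ∧ c ≠ ∞ ∧
      ∀ f g : EuclideanSpace ℝ (Fin n) → EReal,
        choquet n δ Ω (fun x => (f x).abs ^ p) < ∞ →
        choquet n δ Ω (fun x => (g x).abs ^ p) < ∞ →
        (choquet n δ Ω (fun x => ((f x + g x).abs) ^ p)) ^ (1 / p) ≤
          c * (choquet n δ Ω (fun x => (f x).abs ^ p)) ^ (1 / p) +
            c * (choquet n δ Ω (fun x => (g x).abs ^ p)) ^ (1 / p)) ∧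
    (∀ f : EuclideanSpace ℝ (Fin n) → EReal,
      ((choquet n δ Ω (fun x => (f x).abs ^ p)) ^ (1 / p) = 0 ↔
        hContent n δ {x | x ∈ Ω ∧ f x ≠ 0} = 0)) ∧
    (∀ (a : ℝ) (f : EuclideanSpace ℝ (Fin n) → EReal),
      (choquet n δ Ω (fun x => (((a : EReal) * f x).abs) ^ p)) ^ (1 / p) =
        ENNReal.ofReal |a| * (choquet n δ Ω (fun x => (f x).abs ^ p)) ^ (1 / p)) :=
  choquet_quasinorm_general n δ hδ0 p hp Ω
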